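/- arXiv:2505.08551 — 3 statements merged into one kernel-verified Lean document; each statement's English description precedes it below -/
import Mathlib

section
/- In PG(2,q) with q even, for k ∈ GF(q) with k ≠ 0, 1, the conic C_k = V(kxy + z² + yz + xz) is nondegenerate, and its nucleus is the point (1 : 1 : k). -/
/-- The point type of `PG(2,q)` over the field `F`: the projectivization of `F³`.
We also use this type for lines, via line coordinates. -/
abbrev PG2 (F : Type) [Field F] : Type := Projectivization F (Fin 3 → F)

/-- A point of `PG(2,q)` with homogeneous coordinates `(x : y : z)`. -/
noncomputable def pt {F : Type} [Field F] (x y z : F) (h : ![x, y, z] ≠ 0) : PG2 F :=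
  Projectivization.mk F ![x, y, z] h

lemma vec_ne_zero {F : Type} [Field F] {x y z : F} (i : Fin 3) (h : ![x, y, z] i ≠ 0) :
    ![x, y, z] ≠ 0 := fun hz => h (by simp [hz])

/-- Incidence between a line `l` (in line coordinates) and a point `P`. This is well defined:
the pairing is bilinear, so its vanishing is independent of the choice of representatives. -/
def inc {F : Type} [Field F] (l P : PG2 F) : Prop :=
  l.rep 0 * P.rep 0 + l.rep 1 * P.rep 1 + l.rep 2 * P.rep 2 = 0

/-- A set of points is untouchable if no line meets it in exactly one point. -/
def Untouchable {F : Type} [Field F] (S : Set (PG2 F)) : Prop :=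
  ∀ l : PG2 F, {P ∈ S | inc l P}.ncard ≠ 1

/-- A line `l` is tangent to a point set `S` if it meets `S` in exactly one point. -/
def IsTangent {F : Type} [Field F] (l : PG2 F) (S : Set (PG2 F)) : Prop :=
  {P ∈ S | inc l P}.ncard = 1

/-- A nondegenerate conic in `PG(2,q)` is, combinatorially, an oval: a set of `q + 1` points
met by every line in at most `2` points. -/
def IsOval {F : Type} [Field F] (q : ℕ) (S : Set (PG2 F)) : Prop :=
  S.ncard = q + 1 ∧ ∀ l : PG2 F, {P ∈ S | inc l P}.ncard ≤ 2

/-- The conic `C_k = V(kxy + z² + yz + xz)` (membership tested on the canonical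
representative; this is representative-independent since the form is homogeneous). -/
def Cq {F : Type} [Field F] (k : F) : Set (PG2 F) :=
  {P | k * P.rep 0 * P.rep 1 + P.rep 2 ^ 2 + P.rep 1 * P.rep 2 + P.rep 0 * P.rep 2 = 0}


/-!
In characteristic `2`, `C_k` is the bijective image of `ℙ¹ = F ∪ {∞}` under
`r ↦ (r(r+1) : k+r : r(k+r))`, `∞ ↦ (1 : 0 : 1)`. The line with coordinates `(a, b, c)` meets
`C_k` at the zeros of the binary quadratic form `(a+c) s² + (a+b+ck) s t + bk t²`, which is
nonzero because `k ≠ 0, 1`; so every line meets `C_k` in at most two points, and `C_k` has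
`q + 1` points. In characteristic `2` the middle coefficient `a+b+ck` is the derivative of the
form, so when it is nonzero the zeros come in pairs `r ↔ r + (a+b+ck)/(a+c)`. Hence a tangent
line has `a + b + ck = 0`: it passes through `(1 : 1 : k)`.
-/

open Projectivization

section BinaryQuadratic

variable {F : Type} [Field F]

lemma quadratic_eq_zero_iff_of_root {A B C r s : F} (hA : A ≠ 0)
    (hr : A * r ^ 2 + B * r + C = 0) :
    A * s ^ 2 + B * s + C = 0 ↔ s = r ∨ s = -B / A - r := by
  have hfactor : A * s ^ 2 + B * s + C = (s - r) * (A * (s - (-B / A - r))) := by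
    field_simp
    linear_combination hr
  rw [hfactor, mul_eq_zero, mul_eq_zero, sub_eq_zero, sub_eq_zero]
  simp [hA]

/-- The binary quadratic form `A s² + B s t + C t²` on `ℙ¹ = F ∪ {∞}`: `some s` stands for
`(s : 1)` and `none` for `∞ = (1 : 0)`. -/
def quadP1 (A B C : F) : Option F → F
  | none => A
  | some s => A * s ^ 2 + B * s + C

lemma ncard_quadP1_zeros_le_two {A B C : F} (h : A ≠ 0 ∨ B ≠ 0 ∨ C ≠ 0) :
    {o | quadP1 A B C o = 0}.ncard ≤ 2 := by
  obtain ⟨a, b, hsub⟩ : ∃ a b : Option F, {o | quadP1 A B C o = 0} ⊆ {a, b} := by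
    by_cases hA : A = 0
    · refine ⟨none, some (-C / B), ?_⟩
      rintro (_ | s) hs
      · exact Or.inl rfl
      · have hlin : B * s + C = 0 := by simpa [quadP1, hA] using hs
        have hB : B ≠ 0 := by
          rintro rfl
          simp_all
        right
        simp only [Set.mem_singleton_iff, Option.some.injEq]
        field_simp
        linear_combination hlin
    · by_cases hroot : ∃ r, A * r ^ 2 + B * r + C = 0
      · obtain ⟨r, hr⟩ := hroot
        refine ⟨some r, some (-B / A - r), ?_⟩
        rintro (_ | s) hs
        · exact absurd hs hA
        · simpa [quadP1, quadratic_eq_zero_iff_of_root hA hr] using hs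
      · refine ⟨none, none, ?_⟩
        rintro (_ | s) hs
        · exact absurd hs hA
        · exact absurd ⟨s, hs⟩ hroot
  exact (Set.ncard_le_ncard hsub).trans ((Set.ncard_insert_le _ _).trans (by simp))

lemma exists_ne_quadP1_eq_zero [CharP F 2] {A B C : F} (hB : B ≠ 0) {o : Option F}
    (ho : quadP1 A B C o = 0) : ∃ o' ≠ o, quadP1 A B C o' = 0 := by
  rcases o with _ | r
  · refine ⟨some (-C / B), by simp, ?_⟩
    simp only [quadP1] at ho ⊢
    rw [ho]
    field_simp
    ring
  · by_cases hA : A = 0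
    · exact ⟨none, by simp, hA⟩
    · refine ⟨some (-B / A - r), fun h => hB ?_, ?_⟩
      · have hr : -B / A - r = r := Option.some_injective _ h
        field_simp at hr
        linear_combination -hr - A * r * (CharTwo.two_eq_zero : (2 : F) = 0)
      · exact (quadratic_eq_zero_iff_of_root hA ho).2 (Or.inr rfl)

lemma ncard_quadP1_zeros_ne_one [CharP F 2] {A B C : F} (hB : B ≠ 0) :
    {o | quadP1 A B C o = 0}.ncard ≠ 1 := by
  intro h
  obtain ⟨o, ho⟩ := Set.ncard_eq_one.mp h
  have hzero : quadP1 A B C o = 0 := (ho.symm ▸ rfl : o ∈ {o | quadP1 A B C o = 0})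
  obtain ⟨o', hne, hzero'⟩ := exists_ne_quadP1_eq_zero hB hzero
  exact hne (ho ▸ hzero' : o' ∈ ({o} : Set (Option F)))

end BinaryQuadratic

section Conic

variable {F : Type} [Field F]

def conicForm (k : F) (v : Fin 3 → F) : F :=
  k * v 0 * v 1 + v 2 ^ 2 + v 1 * v 2 + v 0 * v 2

lemma conicForm_smul (k a : F) (v : Fin 3 → F) :
    conicForm k (a • v) = a ^ 2 * conicForm k v := by
  simp only [conicForm, Pi.smul_apply, smul_eq_mul]
  ring

lemma mk_mem_Cq_iff {k : F} {v : Fin 3 → F} (hv : v ≠ 0) :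
    mk F v hv ∈ Cq k ↔ conicForm k v = 0 := by
  obtain ⟨a, ha⟩ := exists_smul_eq_mk_rep F v hv
  change conicForm k (mk F v hv).rep = 0 ↔ _
  rw [← ha, Units.smul_def, conicForm_smul]
  simp

lemma inc_iff_dotProduct (l P : PG2 F) : inc l P ↔ l.rep ⬝ᵥ P.rep = 0 := by
  simp [inc, dotProduct, Fin.sum_univ_three]

lemma inc_mk_iff (l : PG2 F) {v : Fin 3 → F} (hv : v ≠ 0) :
    inc l (mk F v hv) ↔ l.rep ⬝ᵥ v = 0 := by
  obtain ⟨a, ha⟩ := exists_smul_eq_mk_rep F v hv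
  rw [inc_iff_dotProduct, ← ha, Units.smul_def, dotProduct_smul, smul_eq_zero]
  simp

def conicParamVec (k : F) : Option F → Fin 3 → F
  | none => ![1, 0, 1]
  | some r => ![r * (r + 1), k + r, r * (k + r)]

variable {k : F}

lemma conicParamVec_ne_zero (hk0 : k ≠ 0) (hk1 : k ≠ 1) (o : Option F) :
    conicParamVec k o ≠ 0 := by
  rcases o with _ | r
  · exact vec_ne_zero 0 (by simp)
  · intro h
    have hy : k + r = 0 := by simpa [conicParamVec] using congr_fun h 1
    have hx : r * (r + 1) = 0 := by simpa [conicParamVec] using congr_fun h 0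
    have hr : r = -k := by linear_combination hy
    rw [hr] at hx
    rcases mul_eq_zero.mp hx with h' | h'
    · exact hk0 (neg_eq_zero.mp h')
    · exact hk1 (by linear_combination -h')

noncomputable def conicParam (hk0 : k ≠ 0) (hk1 : k ≠ 1) (o : Option F) : PG2 F :=
  mk F (conicParamVec k o) (conicParamVec_ne_zero hk0 hk1 o)

lemma conicForm_conicParamVec [CharP F 2] (o : Option F) : conicForm k (conicParamVec k o) = 0 := by
  have h2 : (2 : F) = 0 := CharTwo.two_eq_zero
  rcases o with _ | r <;>
    simp only [conicForm, conicParamVec, Matrix.cons_val_zero, Matrix.cons_val_one, Matrix.cons_val]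
  · linear_combination h2
  · linear_combination r * (k + r) * (k * r + k + r ^ 2 + r) * h2

lemma dotProduct_conicParamVec (w : Fin 3 → F) (o : Option F) :
    w ⬝ᵥ conicParamVec k o = quadP1 (w 0 + w 2) (w 0 + w 1 + w 2 * k) (w 1 * k) o := by
  rcases o with _ | r <;>
    simp only [dotProduct, conicParamVec, Fin.sum_univ_three, Matrix.cons_val_zero,
      Matrix.cons_val_one, Matrix.cons_val, quadP1] <;>
    ring

variable (hk0 : k ≠ 0) (hk1 : k ≠ 1)

lemma conicParam_injective : Function.Injective (conicParam hk0 hk1) := by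
  intro o o' h
  obtain ⟨a, ha⟩ := (mk_eq_mk_iff' F _ _ _ _).mp h
  have ha0 : a ≠ 0 := by
    rintro rfl
    exact conicParamVec_ne_zero hk0 hk1 o (by simpa using ha.symm)
  have h1 := congr_fun ha 1
  have h2 := congr_fun ha 2
  rcases o with _ | r <;> rcases o' with _ | r' <;>
    simp only [conicParamVec, Pi.smul_apply, smul_eq_mul, Matrix.cons_val_one, Matrix.cons_val_two,
      Matrix.cons_val_zero, Matrix.head_cons, Matrix.tail_cons, mul_zero, mul_one] at h1 h2
  · rfl
  · exact absurd (by linear_combination -h2 + r' * h1 : (1 : F) = 0) one_ne_zero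
  · exact absurd (by linear_combination h2 - r * h1 : a = 0) ha0
  · have hcancel : (r - r') * (k + r) = 0 := by linear_combination r' * h1 - h2
    rcases mul_eq_zero.mp hcancel with h | h
    · rw [sub_eq_zero.mp h]
    · have h' : k + r' = 0 := by simpa [h, ha0] using h1
      rw [show r = r' by linear_combination h - h']

lemma mk_mem_range_conicParam [CharP F 2] {v : Fin 3 → F} (hv : v ≠ 0)
    (hQ : conicForm k v = 0) : mk F v hv ∈ Set.range (conicParam hk0 hk1) := by
  have h2 : (2 : F) = 0 := CharTwo.two_eq_zero
  suffices ∃ o, ∃ a : F, a • v = conicParamVec k o by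
    obtain ⟨o, a, ha⟩ := this
    exact ⟨o, (mk_eq_mk_iff' F _ _ _ _).mpr ⟨a, ha⟩⟩
  simp only [conicForm] at hQ
  by_cases hy : v 1 = 0
  · by_cases hz : v 2 = 0
    · have hx : v 0 ≠ 0 := fun hx => hv (by ext i; fin_cases i <;> assumption)
      refine ⟨some k, k * (k + 1) / v 0, ?_⟩
      ext i; fin_cases i <;> simp [conicParamVec, hx, hy, hz, CharTwo.add_self_eq_zero]
    · have hxz : v 0 = v 2 := by
        apply mul_left_cancel₀ hz
        linear_combination -hQ + (k * v 0 + v 2) * hy + v 2 * v 0 * h2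
      refine ⟨none, 1 / v 2, ?_⟩
      ext i; fin_cases i <;> simp [conicParamVec, hxz, hy, hz]
  · refine ⟨some (v 2 / v 1), (k + v 2 / v 1) / v 1, ?_⟩
    ext i; fin_cases i <;>
      simp only [Fin.zero_eta, Fin.mk_one, Fin.reduceFinMk, Pi.smul_apply, smul_eq_mul,
        conicParamVec, Matrix.cons_val_zero, Matrix.cons_val_one, Matrix.cons_val] <;>
      field_simp
    linear_combination hQ - (v 1 * v 2 + v 2 ^ 2) * h2

lemma range_conicParam [CharP F 2] : Set.range (conicParam hk0 hk1) = Cq k := by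
  ext P
  constructor
  · rintro ⟨o, rfl⟩
    exact (mk_mem_Cq_iff _).mpr (conicForm_conicParamVec o)
  · intro hP
    rw [← mk_rep P] at hP ⊢
    exact mk_mem_range_conicParam hk0 hk1 _ ((mk_mem_Cq_iff _).mp hP)

lemma Cq_inter_line_eq_image [CharP F 2] (l : PG2 F) :
    {P ∈ Cq k | inc l P} = conicParam hk0 hk1 ''
      {o | quadP1 (l.rep 0 + l.rep 2) (l.rep 0 + l.rep 1 + l.rep 2 * k) (l.rep 1 * k) o = 0} := by
  rw [← range_conicParam hk0 hk1]
  ext P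
  constructor
  · rintro ⟨⟨o, rfl⟩, hinc⟩
    refine ⟨o, ?_, rfl⟩
    rwa [conicParam, inc_mk_iff, dotProduct_conicParamVec] at hinc
  · rintro ⟨o, ho, rfl⟩
    refine ⟨⟨o, rfl⟩, ?_⟩
    rwa [conicParam, inc_mk_iff, dotProduct_conicParamVec]

end Conic

section Counting

variable {F : Type} [Field F] [CharP F 2] {k : F}

lemma ncard_Cq [Fintype F] (hk0 : k ≠ 0) (hk1 : k ≠ 1) : (Cq k).ncard = Fintype.card F + 1 := by
  rw [← range_conicParam hk0 hk1, Set.ncard_range_of_injective (conicParam_injective hk0 hk1),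
    Nat.card_eq_fintype_card, Fintype.card_option]

lemma ncard_Cq_inter_line (hk0 : k ≠ 0) (hk1 : k ≠ 1) (l : PG2 F) :
    {P ∈ Cq k | inc l P}.ncard = {o | quadP1 (l.rep 0 + l.rep 2)
      (l.rep 0 + l.rep 1 + l.rep 2 * k) (l.rep 1 * k) o = 0}.ncard := by
  rw [Cq_inter_line_eq_image hk0 hk1, Set.ncard_image_of_injective _ (conicParam_injective hk0 hk1)]

lemma ncard_Cq_inter_line_le_two (hk0 : k ≠ 0) (hk1 : k ≠ 1) (l : PG2 F) :
    {P ∈ Cq k | inc l P}.ncard ≤ 2 := by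
  rw [ncard_Cq_inter_line hk0 hk1]
  apply ncard_quadP1_zeros_le_two
  by_contra! hzero
  obtain ⟨hA, hB, hC⟩ := hzero
  have h1 : l.rep 1 = 0 := (mul_eq_zero.mp hC).resolve_right hk0
  have h2 : l.rep 2 = 0 := by
    have : l.rep 2 * (k - 1) = 0 := by linear_combination hB - hA - h1
    exact (mul_eq_zero.mp this).resolve_right (sub_ne_zero.mpr hk1)
  have h0 : l.rep 0 = 0 := by linear_combination hA - h2
  exact l.rep_nonzero (by ext i; fin_cases i <;> assumption)

lemma inc_nucleus_of_isTangent (hk0 : k ≠ 0) (hk1 : k ≠ 1) {l : PG2 F}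
    (hl : IsTangent l (Cq k)) :
    inc l (pt (1 : F) 1 k (vec_ne_zero 0 (by simp))) := by
  rw [IsTangent, ncard_Cq_inter_line hk0 hk1] at hl
  rw [pt, inc_mk_iff]
  by_contra hB
  refine ncard_quadP1_zeros_ne_one (fun h => hB ?_) hl
  simpa [dotProduct, Fin.sum_univ_three] using h

lemma nucleus_not_mem_Cq (hk0 : k ≠ 0) (hk1 : k ≠ 1) :
    pt (1 : F) 1 k (vec_ne_zero 0 (by simp)) ∉ Cq k := by
  rw [pt, mk_mem_Cq_iff]
  intro h
  have hk : k * (k - 1) = 0 := by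
    simp only [conicForm, Matrix.cons_val_zero, Matrix.cons_val_one, Matrix.cons_val] at h
    linear_combination h - 2 * k * (CharTwo.two_eq_zero : (2 : F) = 0)
  rcases mul_eq_zero.mp hk with h | h
  · exact hk0 h
  · exact hk1 (sub_eq_zero.mp h)

end Counting

/-- In `PG(2,q)` with `q` even and `k ≠ 0, 1`, the conic `C_k = V(kxy + z² + yz + xz)` is
nondegenerate, and its nucleus is the point `(1 : 1 : k)`: the point `(1 : 1 : k)` is off the
conic and lies on every tangent line. -/
theorem Cq_nondegenerate_nucleus {F : Type} [Field F] [Fintype F] {q : ℕ}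
    (hq : Fintype.card F = q) (heven : Even q) (k : F) (hk0 : k ≠ 0) (hk1 : k ≠ 1) :
    IsOval q (Cq k) ∧
      pt (1 : F) 1 k (vec_ne_zero 0 (by simp)) ∉ Cq k ∧
      ∀ l : PG2 F, IsTangent l (Cq k) →
        inc l (pt (1 : F) 1 k (vec_ne_zero 0 (by simp))) := by
  have : CharP F 2 :=
    ringChar.of_eq (FiniteField.even_card_iff_char_two.mpr (hq ▸ Nat.even_iff.mp heven))
  exact ⟨⟨hq ▸ ncard_Cq hk0 hk1, ncard_Cq_inter_line_le_two hk0 hk1⟩,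
    nucleus_not_mem_Cq hk0 hk1, fun _ hl => inc_nucleus_of_isTangent hk0 hk1 hl⟩
end

section
/- In PG(2,q) with q ≥ 8 even, if a ∈ GF(q) with a ≠ 0, 1 and a³ ≠ 1, then the set S = C_a ∪ C_{a²} ∪ {(1:1:a²)} is an untouchable set of size 2q − 1, where C_k = V(kxy + z² + yz + xz). -/
namespace PG2

open Projectivization

variable {F : Type} [Field F]

lemma pt_eq_pt_iff {x y z x' y' z' : F} (h : ![x, y, z] ≠ 0) (h' : ![x', y', z'] ≠ 0) :
    pt x y z h = pt x' y' z' h' ↔ ∃ c : F, c * x' = x ∧ c * y' = y ∧ c * z' = z := by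
  simp [pt, mk_eq_mk_iff', funext_iff, Fin.forall_fin_succ]

lemma mem_Cq_pt {k x y z : F} (h : ![x, y, z] ≠ 0) :
    pt x y z h ∈ Cq k ↔ k * x * y + z ^ 2 + y * z + x * z = 0 := by
  obtain ⟨c, hc⟩ := exists_smul_eq_mk_rep F _ h
  simp only [pt, Cq, Set.mem_ofPred_eq, ← hc, Units.smul_def, Pi.smul_apply, smul_eq_mul,
    Matrix.cons_val]
  have := c.ne_zero
  grind

lemma inc_pt (l : PG2 F) {x y z : F} (h : ![x, y, z] ≠ 0) :
    inc l (pt x y z h) ↔ l.rep 0 * x + l.rep 1 * y + l.rep 2 * z = 0 := by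
  obtain ⟨c, hc⟩ := exists_smul_eq_mk_rep F _ h
  simp only [pt, inc, ← hc, Units.smul_def, Pi.smul_apply, smul_eq_mul, Matrix.cons_val]
  have := c.ne_zero
  grind

lemma pt_induction {motive : PG2 F → Prop}
    (h : ∀ x y z (hv : ![x, y, z] ≠ 0), motive (pt x y z hv)) (P : PG2 F) : motive P := by
  induction P using Projectivization.ind with
  | h v hv =>
    obtain ⟨x, y, z, rfl⟩ : ∃ x y z : F, v = ![x, y, z] :=
      ⟨v 0, v 1, v 2, by ext i; fin_cases i <;> rfl⟩
    exact h x y z hv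

lemma untouchable_of_exists_ne {S : Set (PG2 F)}
    (h : ∀ l, ∀ P ∈ S, inc l P → ∃ Q ∈ S, inc l Q ∧ Q ≠ P) : Untouchable S := by
  intro l hl
  obtain ⟨P, hP⟩ := Set.ncard_eq_one.mp hl
  obtain ⟨⟨hPS, hlP⟩, huniq⟩ := Set.eq_singleton_iff_unique_mem.mp hP
  obtain ⟨Q, hQS, hlQ, hQP⟩ := h l P hPS hlP
  exact hQP (huniq Q ⟨hQS, hlQ⟩)

noncomputable def nucleus (k : F) : PG2 F := pt 1 1 k (vec_ne_zero 0 (by simp))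

noncomputable def point011 : PG2 F := pt 0 1 1 (vec_ne_zero 1 (by simp))

lemma inc_nucleus (l : PG2 F) (k : F) :
    inc l (nucleus k) ↔ l.rep 0 + l.rep 1 + l.rep 2 * k = 0 := by
  simp [nucleus, inc_pt]

lemma inc_point011 (l : PG2 F) : inc l point011 ↔ l.rep 1 + l.rep 2 = 0 := by
  simp [point011, inc_pt]

section Parametrization

variable {k : F} (hk0 : k ≠ 0) (hk1 : k ≠ 1)
include hk0 hk1

lemma conicParam_vec_ne_zero (t : F) : ![k + t, t * (t + 1), t * (k + t)] ≠ 0 := by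
  intro h
  have h0 := congrFun h 0
  have h1 := congrFun h 1
  simp only [Matrix.cons_val, Pi.zero_apply] at h0 h1
  grind

/-- The line `z = t x` through the point `(0:1:0)` of `C_k` meets `C_k` again in
`conicParam t`; the missing line `x = 0` gives the point `(0:1:1)`. -/
noncomputable def conicParam (t : F) : PG2 F :=
  pt (k + t) (t * (t + 1)) (t * (k + t)) (conicParam_vec_ne_zero hk0 hk1 t)

lemma conicParam_injective : Function.Injective (conicParam hk0 hk1) := by
  intro t t' h
  obtain ⟨c, h0, h1, h2⟩ := (pt_eq_pt_iff _ _).mp h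
  grind

lemma conicParam_ne_point011 (t : F) : conicParam hk0 hk1 t ≠ point011 := by
  intro h
  obtain ⟨c, h0, h1, h2⟩ := (pt_eq_pt_iff _ _).mp h
  grind

lemma inc_conicParam (l : PG2 F) (t : F) :
    inc l (conicParam hk0 hk1 t) ↔
      (l.rep 1 + l.rep 2) * t ^ 2 + (l.rep 0 + l.rep 1 + l.rep 2 * k) * t + k * l.rep 0 = 0 := by
  rw [conicParam, inc_pt]
  ring_nf

end Parametrization

section CharTwo

variable [CharP F 2]

lemma point011_mem_Cq (k : F) : point011 ∈ Cq k := by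
  simp [point011, mem_Cq_pt, CharTwo.add_self_eq_zero]

lemma nucleus_notMem_Cq {k : F} (hk0 : k ≠ 0) (hk1 : k ≠ 1) : nucleus k ∉ Cq k := by
  rw [nucleus, mem_Cq_pt]
  grind

lemma nucleus_mem_Cq_sq (k : F) : nucleus k ∈ Cq (k ^ 2) := by
  rw [nucleus, mem_Cq_pt]
  grind

section Parametrization

variable {k : F} (hk0 : k ≠ 0) (hk1 : k ≠ 1)
include hk0 hk1

lemma conicParam_mem_Cq (t : F) : conicParam hk0 hk1 t ∈ Cq k := by
  rw [conicParam, mem_Cq_pt]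
  grind

lemma Cq_eq_insert_range_conicParam :
    Cq k = insert point011 (Set.range (conicParam hk0 hk1)) := by
  refine subset_antisymm (fun P hP => ?_) ?_
  · induction P using pt_induction with
    | h x y z hv =>
      rw [mem_Cq_pt] at hP
      by_cases hx : x = 0
      · subst hx
        have hy : y ≠ 0 := by rintro rfl; simp_all
        have hz : z * (z + y) = 0 := by grind
        rcases mul_eq_zero.mp hz with hz | hzy
        · subst hz
          refine Or.inr ⟨k, (pt_eq_pt_iff _ _).mpr ⟨k * (k + 1) / y, ?_, ?_, ?_⟩⟩ <;> grind
        · refine Or.inl ((pt_eq_pt_iff _ _).mpr ⟨y, ?_, ?_, ?_⟩) <;> grind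
      · refine Or.inr ⟨z / x, (pt_eq_pt_iff _ _).mpr ⟨(k + z / x) / x, ?_, ?_, ?_⟩⟩ <;>
          grind
  · rintro _ (rfl | ⟨t, rfl⟩)
    exacts [point011_mem_Cq k, conicParam_mem_Cq hk0 hk1 t]

lemma ncard_Cq [Finite F] : (Cq k).ncard = Nat.card F + 1 := by
  rw [Cq_eq_insert_range_conicParam hk0 hk1,
    Set.ncard_insert_of_notMem (by rintro ⟨t, ht⟩; exact conicParam_ne_point011 hk0 hk1 t ht),
    Set.ncard_range_of_injective (conicParam_injective hk0 hk1)]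

lemma conicParam_mem_Cq_iff {k' : F} (hk' : k' ≠ k) (t : F) :
    conicParam hk0 hk1 t ∈ Cq k' ↔ t ∈ ({0, 1, k} : Set F) := by
  rw [conicParam, mem_Cq_pt]
  simp only [Set.mem_insert_iff, Set.mem_singleton_iff]
  grind

lemma Cq_inter_Cq {k' : F} (hk' : k' ≠ k) :
    Cq k ∩ Cq k' = insert point011 (conicParam hk0 hk1 '' {0, 1, k}) := by
  rw [Cq_eq_insert_range_conicParam hk0 hk1, Set.insert_inter_of_mem (point011_mem_Cq k'),
    ← Set.image_univ, ← Set.image_inter_preimage]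
  congr
  ext t
  simp [conicParam_mem_Cq_iff hk0 hk1 hk']

lemma ncard_Cq_inter_Cq {k' : F} (hk' : k' ≠ k) : (Cq k ∩ Cq k').ncard = 4 := by
  rw [Cq_inter_Cq hk0 hk1 hk',
    Set.ncard_insert_of_notMem
      (by rintro ⟨t, -, ht⟩; exact conicParam_ne_point011 hk0 hk1 t ht),
    Set.ncard_image_of_injective _ (conicParam_injective hk0 hk1),
    Set.ncard_eq_three.mpr ⟨0, 1, k, zero_ne_one, hk0.symm, hk1.symm, rfl⟩]

lemma exists_mem_Cq_inc_of_inc_nucleus [PerfectRing F 2] {l : PG2 F} (hl : inc l (nucleus k)) :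
    ∃ P ∈ Cq k, inc l P := by
  rw [inc_nucleus] at hl
  by_cases hA : l.rep 1 + l.rep 2 = 0
  · exact ⟨point011, point011_mem_Cq k, (inc_point011 l).mpr hA⟩
  · obtain ⟨t, ht⟩ := surjective_frobenius F 2 (k * l.rep 0 / (l.rep 1 + l.rep 2))
    rw [frobenius_def] at ht
    refine ⟨conicParam hk0 hk1 t, conicParam_mem_Cq hk0 hk1 t,
      (inc_conicParam hk0 hk1 l t).mpr ?_⟩
    grind

lemma exists_ne_mem_Cq_inc {l : PG2 F} (hl : ¬ inc l (nucleus k)) {P : PG2 F} (hP : P ∈ Cq k)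
    (hlP : inc l P) : ∃ Q ∈ Cq k, inc l Q ∧ Q ≠ P := by
  rw [inc_nucleus] at hl
  rw [Cq_eq_insert_range_conicParam hk0 hk1] at hP
  rcases hP with rfl | ⟨t, rfl⟩
  · rw [inc_point011] at hlP
    refine ⟨conicParam hk0 hk1 (k * l.rep 0 / (l.rep 0 + l.rep 1 + l.rep 2 * k)),
      conicParam_mem_Cq hk0 hk1 _, (inc_conicParam hk0 hk1 l _).mpr ?_,
      conicParam_ne_point011 hk0 hk1 _⟩
    grind
  · rw [inc_conicParam] at hlP
    by_cases hA : l.rep 1 + l.rep 2 = 0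
    · exact ⟨point011, point011_mem_Cq k, (inc_point011 l).mpr hA,
        (conicParam_ne_point011 hk0 hk1 t).symm⟩
    · refine ⟨conicParam hk0 hk1 (t + (l.rep 0 + l.rep 1 + l.rep 2 * k) / (l.rep 1 + l.rep 2)),
        conicParam_mem_Cq hk0 hk1 _, (inc_conicParam hk0 hk1 l _).mpr ?_, fun h => ?_⟩
      · grind
      · have := conicParam_injective hk0 hk1 h
        grind

end Parametrization

variable {a : F} (ha0 : a ≠ 0) (ha1 : a ≠ 1)
include ha0 ha1

lemma sq_ne_zero_and_ne_one : a ^ 2 ≠ 0 ∧ a ^ 2 ≠ 1 := by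
  grind

theorem untouchable_Cq_union_Cq_sq_union_nucleus [PerfectRing F 2] :
    Untouchable (Cq a ∪ Cq (a ^ 2) ∪ {nucleus (a ^ 2)}) := by
  obtain ⟨hb0, hb1⟩ := sq_ne_zero_and_ne_one ha0 ha1
  refine untouchable_of_exists_ne fun l P hPS hlP => ?_
  by_cases hlN : inc l (nucleus (a ^ 2))
  · obtain ⟨Q, hQ, hlQ⟩ := exists_mem_Cq_inc_of_inc_nucleus hb0 hb1 hlN
    have hQN : Q ≠ nucleus (a ^ 2) := fun h => nucleus_notMem_Cq hb0 hb1 (h ▸ hQ)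
    by_cases hPN : P = nucleus (a ^ 2)
    · exact ⟨Q, Or.inl (Or.inr hQ), hlQ, hPN ▸ hQN⟩
    · exact ⟨_, Or.inr rfl, hlN, Ne.symm hPN⟩
  by_cases hPb : P ∈ Cq (a ^ 2)
  · obtain ⟨Q, hQ, hlQ, hQP⟩ := exists_ne_mem_Cq_inc hb0 hb1 hlN hPb hlP
    exact ⟨Q, Or.inl (Or.inr hQ), hlQ, hQP⟩
  have hPa : P ∈ Cq a := by
    rcases hPS with (h | h) | rfl
    exacts [h, absurd h hPb, absurd hlP hlN]
  by_cases hlNa : inc l (nucleus a)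
  · exact ⟨nucleus a, Or.inl (Or.inr (nucleus_mem_Cq_sq a)), hlNa,
      fun h => hPb (h ▸ nucleus_mem_Cq_sq a)⟩
  · obtain ⟨Q, hQ, hlQ, hQP⟩ := exists_ne_mem_Cq_inc ha0 ha1 hlNa hPa hlP
    exact ⟨Q, Or.inl (Or.inl hQ), hlQ, hQP⟩

theorem ncard_Cq_union_Cq_sq_union_nucleus [Finite F] (ha3 : a ^ 3 ≠ 1) :
    (Cq a ∪ Cq (a ^ 2) ∪ {nucleus (a ^ 2)}).ncard = 2 * Nat.card F - 1 := by
  obtain ⟨hb0, hb1⟩ := sq_ne_zero_and_ne_one ha0 ha1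
  have hN : nucleus (a ^ 2) ∉ Cq a ∪ Cq (a ^ 2) := by
    rintro (h | h)
    · rw [nucleus, mem_Cq_pt] at h
      grind
    · exact nucleus_notMem_Cq hb0 hb1 h
  have hunion := Set.ncard_union_add_ncard_inter (Cq a) (Cq (a ^ 2))
  rw [ncard_Cq ha0 ha1, ncard_Cq hb0 hb1, ncard_Cq_inter_Cq ha0 ha1 (by grind)] at hunion
  rw [Set.union_singleton, Set.ncard_insert_of_notMem hN]
  omega

end CharTwo

end PG2

/-- In `PG(2,q)` with `q ≥ 8` even, if `a ≠ 0, 1` and `a³ ≠ 1`, then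
`S = C_a ∪ C_(a²) ∪ {(1:1:a²)}` is an untouchable set of size `2q − 1`. -/
theorem untouchable_two_q_minus_one {F : Type} [Field F] [Fintype F] {q : ℕ}
    (hq : Fintype.card F = q) (heven : Even q)
    (a : F) (ha0 : a ≠ 0) (ha1 : a ≠ 1) (ha3 : a ^ 3 ≠ 1) :
    Untouchable (Cq a ∪ Cq (a ^ 2) ∪ {pt (1 : F) 1 (a ^ 2) (vec_ne_zero 0 (by simp))}) ∧
      (Cq a ∪ Cq (a ^ 2) ∪
        {pt (1 : F) 1 (a ^ 2) (vec_ne_zero 0 (by simp))}).ncard = 2 * q - 1 := by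
  have : CharP F 2 :=
    ringChar.of_eq (FiniteField.even_card_iff_char_two.mpr (Nat.even_iff.mp (hq ▸ heven)))
  refine ⟨PG2.untouchable_Cq_union_Cq_sq_union_nucleus ha0 ha1, ?_⟩
  rw [← hq, ← Nat.card_eq_fintype_card]
  exact PG2.ncard_Cq_union_Cq_sq_union_nucleus ha0 ha1 ha3
end

section
/- In PG(2,q) with q ≥ 8 even, for distinct nonzero a, b ∈ GF(q), the set S = D_a ∪ D_b ∪ {(0:1:a), (0:1:b)} is an untouchable set of size 2q + 1, where D_k = V(kxy + z² + xz). -/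
/-- The conic `D_k = V(kxy + z² + xz)`. -/
def Dk {F : Type} [Field F] (k : F) : Set (PG2 F) :=
  {P | k * P.rep 0 * P.rep 1 + P.rep 2 ^ 2 + P.rep 0 * P.rep 2 = 0}

/-!
In characteristic 2 every tangent to the conic `D_k` (`k ≠ 0`) passes through its nucleus
`(0:1:k)`: a line `l` through the point `(1 : -(z²+z)/k : z)` of `D_k` that misses the nucleus
meets `D_k` again at the parameter `z + 1 + k l₂/l₁` (or at `(0:1:0)` when `l₁ = 0`). When every
element is a square, every line through the nucleus meets `D_k` as well. Hence `D_k ∪ {(0:1:k)}`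
is a hyperoval, so untouchable, and a union of untouchable sets is untouchable. For the size,
`|D_a| = |D_b| = q + 1`, the two conics share exactly `(0:1:0), (1:0:0), (1:0:1)`, and the nuclei
lie on neither conic.
-/

section

open Projectivization

variable {F : Type} [Field F]

lemma exists_eq_pt (P : PG2 F) : ∃ (x y z : F) (h : ![x, y, z] ≠ 0), P = pt x y z h := by
  induction P using Projectivization.ind with
  | h v hv =>
    have hv' : ![v 0, v 1, v 2] = v := by ext i; fin_cases i <;> rfl
    exact ⟨v 0, v 1, v 2, hv' ▸ hv, by rw [pt]; congr 1; exact hv'.symm⟩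

lemma exists_rep_pt_eq_smul {x y z : F} (h : ![x, y, z] ≠ 0) :
    ∃ c : F, c ≠ 0 ∧ (pt x y z h).rep = c • ![x, y, z] := by
  obtain ⟨u, hu⟩ := exists_smul_eq_mk_rep F ![x, y, z] h
  exact ⟨u, u.ne_zero, hu.symm⟩

lemma inc_pt_iff (l : PG2 F) {x y z : F} (h : ![x, y, z] ≠ 0) :
    inc l (pt x y z h) ↔ l.rep 0 * x + l.rep 1 * y + l.rep 2 * z = 0 := by
  obtain ⟨c, hc, hrep⟩ := exists_rep_pt_eq_smul h
  simp only [inc, hrep, Pi.smul_apply, smul_eq_mul, Matrix.cons_val_zero, Matrix.cons_val_one,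
    Matrix.cons_val_two, Matrix.head_cons, Matrix.tail_cons]
  rw [show ∀ u v w : F, u * (c * x) + v * (c * y) + w * (c * z) = c * (u * x + v * y + w * z)
    from fun _ _ _ => by ring, mul_eq_zero, or_iff_right hc]

lemma pt_mem_Dk_iff (k : F) {x y z : F} (h : ![x, y, z] ≠ 0) :
    pt x y z h ∈ Dk k ↔ k * x * y + z ^ 2 + x * z = 0 := by
  obtain ⟨c, hc, hrep⟩ := exists_rep_pt_eq_smul h
  simp only [Dk, Set.mem_ofPred_eq, hrep, Pi.smul_apply, smul_eq_mul, Matrix.cons_val_zero,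
    Matrix.cons_val_one, Matrix.cons_val_two, Matrix.head_cons, Matrix.tail_cons]
  rw [show k * (c * x) * (c * y) + (c * z) ^ 2 + c * x * (c * z)
    = c ^ 2 * (k * x * y + z ^ 2 + x * z) by ring, mul_eq_zero, or_iff_right (pow_ne_zero 2 hc)]

lemma pt_eq_pt_iff {x y z x' y' z' : F} (h : ![x, y, z] ≠ 0) (h' : ![x', y', z'] ≠ 0) :
    pt x y z h = pt x' y' z' h' ↔ ∃ c : F, c * x' = x ∧ c * y' = y ∧ c * z' = z := by
  simp [pt, mk_eq_mk_iff', funext_iff, Fin.forall_fin_succ]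

noncomputable def pt010 : PG2 F := pt 0 1 0 (vec_ne_zero 1 (by simp))

noncomputable def nucleus (k : F) : PG2 F := pt 0 1 k (vec_ne_zero 1 (by simp))

noncomputable def conicPt (k z : F) : PG2 F := pt 1 (-(z ^ 2 + z) / k) z (vec_ne_zero 0 (by simp))

lemma pt010_mem_Dk (k : F) : pt010 ∈ Dk k := by
  simp [pt010, pt_mem_Dk_iff]

lemma conicPt_mem_Dk_iff {k : F} (hk : k ≠ 0) (t z : F) :
    conicPt k z ∈ Dk t ↔ (k - t) * (z ^ 2 + z) = 0 := by
  rw [conicPt, pt_mem_Dk_iff, show t * 1 * (-(z ^ 2 + z) / k) + z ^ 2 + 1 * z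
    = (k - t) * (z ^ 2 + z) / k by field_simp; ring, div_eq_zero_iff, or_iff_left hk]

lemma conicPt_injective (k : F) : Function.Injective (conicPt k) := by
  intro z z' h
  obtain ⟨c, hc1, -, hcz⟩ := (pt_eq_pt_iff _ _).mp h
  simpa [show c = 1 by simpa using hc1] using hcz.symm

lemma conicPt_ne_pt010 (k z : F) : conicPt k z ≠ pt010 := by
  simp [conicPt, pt010, pt_eq_pt_iff]

lemma nucleus_injective : Function.Injective (nucleus (F := F)) := by
  intro s t h
  obtain ⟨c, -, hc1, hct⟩ := (pt_eq_pt_iff _ _).mp h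
  simpa [show c = 1 by simpa using hc1] using hct.symm

lemma nucleus_notMem_Dk {k : F} (hk : k ≠ 0) (t : F) : nucleus k ∉ Dk t := by
  simpa [nucleus, pt_mem_Dk_iff] using hk

lemma Dk_eq_insert_range {k : F} (hk : k ≠ 0) :
    Dk k = insert pt010 (Set.range (conicPt k)) := by
  ext P
  refine ⟨fun hP => ?_, ?_⟩
  · obtain ⟨x, y, z, h, rfl⟩ := exists_eq_pt P
    rw [pt_mem_Dk_iff] at hP
    by_cases hx : x = 0
    · subst hx
      have hz : z = 0 := pow_eq_zero_iff two_ne_zero |>.mp (by simpa using hP)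
      subst hz
      left
      exact (pt_eq_pt_iff _ _).mpr ⟨y, by simp, by simp, by simp⟩
    · right
      refine ⟨z / x, ((pt_eq_pt_iff _ _).mpr ⟨x, by simp, ?_, by field_simp⟩).symm⟩
      field_simp
      linear_combination -hP
  · rintro (rfl | ⟨z, rfl⟩)
    · exact pt010_mem_Dk k
    · exact (conicPt_mem_Dk_iff hk k z).mpr (by simp)

lemma ncard_Dk [Finite F] {k : F} (hk : k ≠ 0) : (Dk k).ncard = Nat.card F + 1 := by
  have hnotMem : pt010 ∉ Set.range (conicPt k) := by
    rintro ⟨z, hz⟩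
    exact conicPt_ne_pt010 k z hz
  rw [Dk_eq_insert_range hk, Set.ncard_insert_of_notMem hnotMem, ← Nat.card_coe_set_eq,
    Nat.card_range_of_injective (conicPt_injective k)]

lemma Dk_inter_Dk {a b : F} (hb : b ≠ 0) (hab : a ≠ b) :
    Dk a ∩ Dk b = {pt010, conicPt b 0, conicPt b (-1)} := by
  have hsub : b - a ≠ 0 := sub_ne_zero.mpr hab.symm
  ext P
  simp only [Set.mem_inter_iff, Set.mem_insert_iff, Set.mem_singleton_iff]
  refine ⟨fun ⟨hPa, hPb⟩ => ?_, ?_⟩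
  · rw [Dk_eq_insert_range hb] at hPb
    obtain rfl | ⟨z, rfl⟩ := hPb
    · exact Or.inl rfl
    · rw [conicPt_mem_Dk_iff hb, mul_eq_zero, or_iff_right hsub,
        show z ^ 2 + z = z * (z - -1) by ring, mul_eq_zero, sub_eq_zero] at hPa
      rcases hPa with rfl | rfl
      · exact Or.inr (Or.inl rfl)
      · exact Or.inr (Or.inr rfl)
  · rintro (rfl | rfl | rfl)
    · exact ⟨pt010_mem_Dk a, pt010_mem_Dk b⟩
    all_goals exact ⟨(conicPt_mem_Dk_iff hb a _).mpr (by ring),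
      (conicPt_mem_Dk_iff hb b _).mpr (by ring)⟩

lemma ncard_Dk_inter_Dk {a b : F} (hb : b ≠ 0) (hab : a ≠ b) : (Dk a ∩ Dk b).ncard = 3 := by
  rw [Dk_inter_Dk hb hab, Set.ncard_eq_three]
  exact ⟨_, _, _, (conicPt_ne_pt010 b 0).symm, (conicPt_ne_pt010 b (-1)).symm,
    (conicPt_injective b).ne (by simp), rfl⟩

lemma ncard_Dk_union_Dk [Finite F] {a b : F} (ha : a ≠ 0) (hb : b ≠ 0) (hab : a ≠ b) :
    (Dk a ∪ Dk b).ncard = 2 * Nat.card F - 1 := by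
  have := Set.ncard_union_add_ncard_inter (Dk a) (Dk b)
  rw [ncard_Dk ha, ncard_Dk hb, ncard_Dk_inter_Dk hb hab] at this
  omega

lemma untouchable_iff {S : Set (PG2 F)} :
    Untouchable S ↔ ∀ l, ∀ P ∈ S, inc l P → ∃ Q ∈ S, Q ≠ P ∧ inc l Q := by
  refine ⟨fun hS l P hP hlP => ?_, fun h l hone => ?_⟩
  · by_contra! hlone
    exact hS l (Set.ncard_eq_one.mpr ⟨P, Set.eq_singleton_iff_unique_mem.mpr
      ⟨⟨hP, hlP⟩, fun Q ⟨hQ, hlQ⟩ => by_contra fun hQP => hlone Q hQ hQP hlQ⟩⟩)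
  · obtain ⟨P, hP⟩ := Set.ncard_eq_one.mp hone
    obtain ⟨hPS, hlP⟩ : P ∈ {P ∈ S | inc l P} := hP ▸ rfl
    obtain ⟨Q, hQS, hQP, hlQ⟩ := h l P hPS hlP
    have hQ : Q ∈ {P ∈ S | inc l P} := ⟨hQS, hlQ⟩
    rw [hP] at hQ
    exact hQP hQ

lemma Untouchable.union {S T : Set (PG2 F)} (hS : Untouchable S) (hT : Untouchable T) :
    Untouchable (S ∪ T) := by
  rw [untouchable_iff] at *
  rintro l P (hP | hP) hlP
  · obtain ⟨Q, hQ, hQP, hlQ⟩ := hS l P hP hlP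
    exact ⟨Q, Or.inl hQ, hQP, hlQ⟩
  · obtain ⟨Q, hQ, hQP, hlQ⟩ := hT l P hP hlP
    exact ⟨Q, Or.inr hQ, hQP, hlQ⟩

lemma inc_conicPt_iff (l : PG2 F) {k : F} (hk : k ≠ 0) (z : F) :
    inc l (conicPt k z) ↔ k * l.rep 0 - l.rep 1 * (z ^ 2 + z) + k * l.rep 2 * z = 0 := by
  rw [conicPt, inc_pt_iff, ← mul_eq_zero_iff_left hk, mul_comm]
  congr! 1
  field_simp
  ring

section CharTwo

variable [CharP F 2]

lemma exists_mem_Dk_inc_of_inc_nucleus [PerfectRing F 2] {k : F} (hk : k ≠ 0) {l : PG2 F}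
    (hN : inc l (nucleus k)) : ∃ Q ∈ Dk k, inc l Q := by
  rw [nucleus, inc_pt_iff] at hN
  by_cases hl2 : l.rep 2 = 0
  · refine ⟨pt010, pt010_mem_Dk k, ?_⟩
    rw [pt010, inc_pt_iff]
    linear_combination hN - k * hl2
  · obtain ⟨z, hz⟩ := surjective_frobenius F 2 (l.rep 0 / l.rep 2)
    rw [frobenius_def] at hz
    refine ⟨conicPt k z, (conicPt_mem_Dk_iff hk k z).mpr (by ring), ?_⟩
    have hz' : l.rep 2 * z ^ 2 = l.rep 0 := by rw [hz, mul_div_cancel₀ _ hl2]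
    rw [inc_conicPt_iff l hk]
    linear_combination -(z ^ 2 + z) * hN + k * hz' +
      (k * l.rep 0 + k * l.rep 2 * z) * (CharTwo.two_eq_zero (R := F))

lemma exists_ne_mem_Dk_inc_of_not_inc_nucleus {k : F} (hk : k ≠ 0) {l P : PG2 F}
    (hP : P ∈ Dk k) (hlP : inc l P) (hN : ¬ inc l (nucleus k)) :
    ∃ Q ∈ Dk k, Q ≠ P ∧ inc l Q := by
  rw [nucleus, inc_pt_iff] at hN
  rw [Dk_eq_insert_range hk] at hP ⊢
  obtain rfl | ⟨z, rfl⟩ := hP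
  · rw [pt010, inc_pt_iff] at hlP
    have hl2 : l.rep 2 ≠ 0 := fun h => hN (by linear_combination hlP + k * h)
    refine ⟨conicPt k (-(l.rep 0 / l.rep 2)), Or.inr ⟨_, rfl⟩, conicPt_ne_pt010 k _, ?_⟩
    have hdiv : l.rep 2 * (l.rep 0 / l.rep 2) = l.rep 0 := mul_div_cancel₀ _ hl2
    rw [inc_conicPt_iff l hk]
    linear_combination (-((l.rep 0 / l.rep 2) ^ 2 - l.rep 0 / l.rep 2)) * hlP - k * hdiv
  · rw [inc_conicPt_iff l hk] at hlP
    by_cases hl1 : l.rep 1 = 0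
    · refine ⟨pt010, Or.inl rfl, (conicPt_ne_pt010 k z).symm, ?_⟩
      rw [pt010, inc_pt_iff]
      linear_combination hl1
    · set s := 1 + k * l.rep 2 / l.rep 1 with hs_def
      have hs : l.rep 1 * s = l.rep 1 + k * l.rep 2 := by
        rw [hs_def]; field_simp
      have hs0 : s ≠ 0 := fun h0 => hN (by linear_combination -hs + l.rep 1 * h0)
      refine ⟨conicPt k (z + s), Or.inr ⟨_, rfl⟩,
        (conicPt_injective k).ne (by simpa using hs0), ?_⟩
      rw [inc_conicPt_iff l hk]
      linear_combination hlP - s * hs +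
        (-(l.rep 1 * z * s) - l.rep 1 * s) * (CharTwo.two_eq_zero (R := F))

lemma untouchable_insert_nucleus_Dk [PerfectRing F 2] {k : F} (hk : k ≠ 0) :
    Untouchable (insert (nucleus k) (Dk k)) := by
  rw [untouchable_iff]
  rintro l P (rfl | hP) hlP
  · obtain ⟨Q, hQ, hlQ⟩ := exists_mem_Dk_inc_of_inc_nucleus hk hlP
    exact ⟨Q, Or.inr hQ, fun h => nucleus_notMem_Dk hk k (h ▸ hQ), hlQ⟩
  · by_cases hN : inc l (nucleus k)
    · exact ⟨nucleus k, Or.inl rfl, fun h => nucleus_notMem_Dk hk k (h ▸ hP), hN⟩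
    · obtain ⟨Q, hQ, hQP, hlQ⟩ := exists_ne_mem_Dk_inc_of_not_inc_nucleus hk hP hlP hN
      exact ⟨Q, Or.inr hQ, hQP, hlQ⟩

end CharTwo

end

/-- In `PG(2,q)` with `q ≥ 8` even, for distinct nonzero `a, b`, the set
`S = D_a ∪ D_b ∪ {(0:1:a), (0:1:b)}` is an untouchable set of size `2q + 1`. -/
theorem untouchable_two_q_plus_one_even {F : Type} [Field F] [Fintype F] {q : ℕ}
    (hq : Fintype.card F = q) (heven : Even q)
    (a b : F) (ha : a ≠ 0) (hb : b ≠ 0) (hab : a ≠ b) :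
    Untouchable (Dk a ∪ Dk b ∪ {pt (0 : F) 1 a (vec_ne_zero 1 (by simp)),
        pt (0 : F) 1 b (vec_ne_zero 1 (by simp))}) ∧
      (Dk a ∪ Dk b ∪ {pt (0 : F) 1 a (vec_ne_zero 1 (by simp)),
        pt (0 : F) 1 b (vec_ne_zero 1 (by simp))}).ncard = 2 * q + 1 := by
  have : CharP F 2 := ringChar.of_eq <| FiniteField.even_card_iff_char_two.mpr <|
    hq ▸ Nat.even_iff.mp heven
  change Untouchable (Dk a ∪ Dk b ∪ {nucleus a, nucleus b}) ∧
    (Dk a ∪ Dk b ∪ {nucleus a, nucleus b}).ncard = 2 * q + 1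
  constructor
  · have hS : Dk a ∪ Dk b ∪ {nucleus a, nucleus b}
        = insert (nucleus a) (Dk a) ∪ insert (nucleus b) (Dk b) := by
      ext P
      simp only [Set.mem_union, Set.mem_insert_iff, Set.mem_singleton_iff]
      tauto
    rw [hS]
    exact (untouchable_insert_nucleus_Dk ha).union (untouchable_insert_nucleus_Dk hb)
  · have hdisj : Disjoint (Dk a ∪ Dk b) {nucleus a, nucleus b} := by
      simp [Set.disjoint_insert_right, nucleus_notMem_Dk ha, nucleus_notMem_Dk hb]
    rw [Set.ncard_union_eq hdisj, ncard_Dk_union_Dk ha hb hab,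
      Set.ncard_pair (nucleus_injective.ne hab), Nat.card_eq_fintype_card, hq]
    have : 0 < q := hq ▸ Fintype.card_pos
    omega
end
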